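/- arXiv:math/0410220 — 4 statements merged into one kernel-verified Lean document; each statement's English description precedes it below -/
import Mathlib

section
/- (Division theorem) Let k be a field, ≺ a local monomial order on ℕ^n, and g_1,…,g_r nonzero elements of k[[x]]. Let Δ_1,…,Δ_r, Δ̄ be the partition of ℕ^n associated to e_j = exp(g_j), j = 1,…,r. Then for every f ∈ k[[x]] there exists a unique tuple (q_1,…,q_r,R) ∈ k[[x]]^{r+1} such that: (i) f = q_1 g_1 + ⋯ + q_r g_r + R; (ii) for each j, q_j = 0 or ND(q_j) + e_j ⊆ Δ_j; (iii) R = 0 or ND(R) ⊆ Δ̄. -/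
open MvPowerSeries

noncomputable section

/-- A monomial order: a linear (strict total) order on an additive monoid of exponents,
compatible with addition. -/
structure IsMonomialOrder {M : Type*} [AddCommMonoid M] (lt : M → M → Prop) : Prop where
  total : ∀ a b, lt a b ∨ a = b ∨ lt b a
  irrefl : ∀ a, ¬ lt a a
  trans : ∀ a b c, lt a b → lt b c → lt a c
  add_right : ∀ a b c, lt a b → lt (a + c) (b + c)

/-- A local monomial order: a monomial order for which `α ≼ 0` for every `α`. -/
structure IsLocalMonomialOrder {M : Type*} [AddCommMonoid M] (lt : M → M → Prop)
    extends IsMonomialOrder lt : Prop where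
  le_zero : ∀ a, a = 0 ∨ lt a 0

/-- A monomial well order: a monomial order for which `0` is the least element. -/
structure IsWellMonomialOrder {M : Type*} [AddCommMonoid M] (lt : M → M → Prop)
    extends IsMonomialOrder lt : Prop where
  zero_le : ∀ a, a = 0 ∨ lt 0 a

/-- The Newton diagram of a multivariate power series. -/
def ND {n : ℕ} {k : Type*} [Semiring k] (f : MvPowerSeries (Fin n) k) : Set (Fin n →₀ ℕ) :=
  {α | MvPowerSeries.coeff (R := k) α f ≠ 0}

/-- `e` is the `lt`-greatest element of the Newton diagram of `f`, i.e. `e = exp(f)`. -/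
def IsExp {n : ℕ} {k : Type*} [Semiring k] (lt : (Fin n →₀ ℕ) → (Fin n →₀ ℕ) → Prop)
    (f : MvPowerSeries (Fin n) k) (e : Fin n →₀ ℕ) : Prop :=
  e ∈ ND f ∧ ∀ β ∈ ND f, β ≠ e → lt β e

/-- `e + ℕ^n`. -/
def upSet {n : ℕ} (e : Fin n →₀ ℕ) : Set (Fin n →₀ ℕ) := {α | ∃ γ, α = e + γ}

/-- The set of leading exponents of the nonzero elements of an ideal of power series. -/
def ExpSet {n : ℕ} {k : Type*} [Semiring k] (lt : (Fin n →₀ ℕ) → (Fin n →₀ ℕ) → Prop)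
    (J : Ideal (MvPowerSeries (Fin n) k)) : Set (Fin n →₀ ℕ) :=
  {e | ∃ f ∈ J, IsExp lt f e}

/-- The region `Δ_j` of the partition of `ℕ^n` associated with `e_1, …, e_r`. -/
def Delta {n r : ℕ} (e : Fin r → (Fin n →₀ ℕ)) (j : Fin r) : Set (Fin n →₀ ℕ) :=
  upSet (e j) \ ⋃ (i : Fin r) (_ : i < j), upSet (e i)

/-- The region `Δ̄` of the partition of `ℕ^n` associated with `e_1, …, e_r`. -/
def DeltaBar {n r : ℕ} (e : Fin r → (Fin n →₀ ℕ)) : Set (Fin n →₀ ℕ) :=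
  (⋃ (i : Fin r), upSet (e i))ᶜ

/-- Condition (ii) of the division theorem: each quotient `q_j` is `0` or satisfies
`ND(q_j) + e_j ⊆ Δ_j`. -/
def QuotCond {n r : ℕ} {k : Type*} [Semiring k] (e : Fin r → (Fin n →₀ ℕ))
    (q : Fin r → MvPowerSeries (Fin n) k) : Prop :=
  ∀ j, q j = 0 ∨ ∀ α ∈ ND (q j), α + e j ∈ Delta e j

/-- Condition (iii) of the division theorem: the remainder `R` is `0` or satisfies
`ND(R) ⊆ Δ̄`. -/
def RemCond {n r : ℕ} {k : Type*} [Semiring k] (e : Fin r → (Fin n →₀ ℕ))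
    (R : MvPowerSeries (Fin n) k) : Prop :=
  R = 0 ∨ ND R ⊆ DeltaBar e

/-!
Since `Δ_1, …, Δ_r, Δ̄` partition `ℕ^n`, a tuple `(q_1, …, q_r, R)` satisfying (ii) and (iii) is
the same thing as one coefficient function `v : ℕ^n → k`: `v α` is the coefficient of
`x^(α - e_j)` in `q_j` for `α ∈ Δ_j`, and that of `x^α` in `R` for `α ∈ Δ̄`. The coefficient of
`x^α` in `∑ q_j g_j + R` is `c_α v(α)` plus terms involving only the `v β` with `α ≺ β`, where
`c_α ≠ 0` is the leading coefficient of `g_j` if `α ∈ Δ_j` and `1` if `α ∈ Δ̄`. By Dickson's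
lemma and `α ≼ 0`, the relation `≻` is well-founded, so this triangular system has exactly one
solution `v` for every `f`.
-/

theorem AddMonoidHom.bijective_of_triangular {σ K : Type*} [DivisionRing K]
    {rel : σ → σ → Prop} (hrel : WellFounded rel) (Φ : (σ → K) →+ (σ → K))
    (hΦ : ∀ a, ∃ c ≠ 0, ∀ w : σ → K, (∀ b, rel b a → w b = 0) → Φ w a = c * w a) :
    Function.Bijective Φ := by
  choose c hc0 hc using hΦ
  refine ⟨(injective_iff_map_eq_zero Φ).2 fun w hw => funext fun a => ?_, fun y => ?_⟩
  · induction a using hrel.induction with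
    | _ a ih =>
      have h := hc a w ih
      rw [hw] at h
      exact (mul_eq_zero.1 h.symm).resolve_left (hc0 a)
  · classical
    let v : σ → K := hrel.fix fun a rec =>
      (c a)⁻¹ * (y a - Φ (fun b => if h : rel b a then rec b h else 0) a)
    refine ⟨v, funext fun a => ?_⟩
    set u : σ → K := fun b => if rel b a then v b else 0
    have hv : v a = (c a)⁻¹ * (y a - Φ u a) := hrel.fix_eq _ a
    have hdiag : Φ (v - u) a = c a * v a := by
      rw [hc a _ fun b hb => by simp [u, hb]]
      simp [u, hrel.irrefl.irrefl a]
    calc Φ v a = Φ u a + Φ (v - u) a := by rw [← Pi.add_apply, ← map_add, add_sub_cancel]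
      _ = y a := by rw [hdiag, hv, mul_inv_cancel_left₀ (hc0 a)]; abel

theorem IsLocalMonomialOrder.wellFounded_flip {M : Type*} [AddCommMonoid M] [LE M]
    [ExistsAddOfLE M] [WellQuasiOrderedLE M] {lt : M → M → Prop}
    (hlt : IsLocalMonomialOrder lt) : WellFounded (flip lt) := by
  have : IsStrictOrder M (flip lt) :=
    { irrefl := hlt.irrefl, trans := fun a b c hab hbc => hlt.trans c b a hbc hab }
  refine RelEmbedding.wellFounded_iff_isEmpty.2 ⟨fun φ => ?_⟩
  obtain ⟨a, b, hab, hle⟩ := wellQuasiOrdered_le φ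
  obtain ⟨δ, hδ⟩ := exists_add_of_le hle
  have hchain : lt (φ a) (φ b) := φ.map_rel_iff.2 hab
  rcases hlt.le_zero δ with rfl | hδ0
  · rw [hδ, add_zero] at hchain
    exact hlt.irrefl _ hchain
  · have hback := hlt.add_right δ 0 (φ a) hδ0
    rw [zero_add, add_comm, ← hδ] at hback
    exact hlt.irrefl _ (hlt.trans _ _ _ hchain hback)

open Finset.HasAntidiagonal in
theorem coeff_mul_of_isExp {n : ℕ} {k : Type*} [Semiring k]
    {lt : (Fin n →₀ ℕ) → (Fin n →₀ ℕ) → Prop} (hlt : IsMonomialOrder lt)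
    {q g : MvPowerSeries (Fin n) k} {e α : Fin n →₀ ℕ} (he : IsExp lt g e)
    (hq : ∀ β, lt α (β + e) → coeff β q = 0) :
    coeff α (q * g) = if e ≤ α then coeff (α - e) q * coeff e g else 0 := by
  have hoff : ∀ p ∈ antidiagonal α, p.2 ≠ e → coeff p.1 q * coeff p.2 g = 0 := by
    intro p hp hpe
    by_cases hg : coeff p.2 g = 0
    · rw [hg, mul_zero]
    · have hα : lt α (p.1 + e) := by
        rw [← mem_antidiagonal.1 hp, add_comm p.1, add_comm p.1]
        exact hlt.add_right _ _ _ (he.2 p.2 hg hpe)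
      rw [hq p.1 hα, zero_mul]
  rw [coeff_mul]
  split_ifs with hle
  · refine Finset.sum_eq_single (α - e, e) (fun p hp hne => hoff p hp fun hpe => hne ?_)
      (fun h => ?_)
    · exact Prod.ext (eq_tsub_of_add_eq (hpe ▸ mem_antidiagonal.1 hp)) hpe
    · exact absurd (mem_antidiagonal.2 (tsub_add_cancel_of_le hle)) h
  · refine Finset.sum_eq_zero fun p hp => hoff p hp fun hpe => hle ?_
    exact hpe ▸ mem_antidiagonal.1 hp ▸ le_add_self

section Partition

variable {n r : ℕ} {e : Fin r → Fin n →₀ ℕ} {α : Fin n →₀ ℕ}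

theorem mem_upSet_iff {e : Fin n →₀ ℕ} : α ∈ upSet e ↔ e ≤ α :=
  ⟨fun ⟨_, hγ⟩ => hγ ▸ le_self_add, fun h => ⟨α - e, (add_tsub_cancel_of_le h).symm⟩⟩

theorem le_of_mem_Delta {j : Fin r} (h : α ∈ Delta e j) : e j ≤ α :=
  mem_upSet_iff.1 h.1

theorem eq_of_mem_Delta {i j : Fin r} (hi : α ∈ Delta e i) (hj : α ∈ Delta e j) : i = j := by
  by_contra hne
  rcases lt_or_gt_of_ne hne with h | h
  · exact hj.2 (Set.mem_iUnion₂.2 ⟨i, h, hi.1⟩)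
  · exact hi.2 (Set.mem_iUnion₂.2 ⟨j, h, hj.1⟩)

theorem notMem_DeltaBar_of_mem_Delta {j : Fin r} (h : α ∈ Delta e j) : α ∉ DeltaBar e :=
  fun hbar => hbar (Set.mem_iUnion.2 ⟨j, h.1⟩)

theorem exists_mem_Delta_of_notMem_DeltaBar (h : α ∉ DeltaBar e) : ∃ j, α ∈ Delta e j := by
  obtain ⟨j, hj, hmin⟩ := wellFounded_lt.has_min {i | α ∈ upSet (e i)}
    (Set.mem_iUnion.1 (not_not.1 h))
  exact ⟨j, hj, fun hlow => by
    obtain ⟨i, hi, hα⟩ := Set.mem_iUnion₂.1 hlow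
    exact hmin i hα hi⟩

end Partition

section DivisionMap

variable {n r : ℕ} {k : Type*}

def quotientOf [Zero k] (e : Fin r → Fin n →₀ ℕ) (v : (Fin n →₀ ℕ) → k) (j : Fin r) :
    MvPowerSeries (Fin n) k :=
  fun β => (Delta e j).indicator v (β + e j)

def remainderOf [Zero k] (e : Fin r → Fin n →₀ ℕ) (v : (Fin n →₀ ℕ) → k) :
    MvPowerSeries (Fin n) k :=
  (DeltaBar e).indicator v

variable [Semiring k] {e : Fin r → Fin n →₀ ℕ}

theorem coeff_quotientOf (v : (Fin n →₀ ℕ) → k) (j : Fin r) (β : Fin n →₀ ℕ) :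
    coeff β (quotientOf e v j) = (Delta e j).indicator v (β + e j) :=
  rfl

theorem coeff_remainderOf (v : (Fin n →₀ ℕ) → k) (β : Fin n →₀ ℕ) :
    coeff β (remainderOf e v) = (DeltaBar e).indicator v β :=
  rfl

theorem quotCond_quotientOf (v : (Fin n →₀ ℕ) → k) : QuotCond e (quotientOf e v) :=
  fun _ => Or.inr fun _ hβ => Set.mem_of_indicator_ne_zero hβ

theorem remCond_remainderOf (v : (Fin n →₀ ℕ) → k) : RemCond e (remainderOf e v) :=
  Or.inr fun _ hβ => Set.mem_of_indicator_ne_zero hβ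

theorem exists_eq_quotientOf_remainderOf {q : Fin r → MvPowerSeries (Fin n) k}
    {R : MvPowerSeries (Fin n) k} (hq : QuotCond e q) (hR : RemCond e R) :
    ∃ v, quotientOf e v = q ∧ remainderOf e v = R := by
  classical
  refine ⟨fun α => if h : ∃ j, α ∈ Delta e j then coeff (α - e h.choose) (q h.choose)
    else coeff α R, funext fun j => ?_, ?_⟩
  · ext β
    rw [coeff_quotientOf]
    by_cases hβ : β + e j ∈ Delta e j
    · have h : ∃ i, β + e j ∈ Delta e i := ⟨j, hβ⟩
      rw [Set.indicator_of_mem hβ, dif_pos h, eq_of_mem_Delta h.choose_spec hβ,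
        add_tsub_cancel_right]
    · rw [Set.indicator_of_notMem hβ]
      rcases hq j with h0 | hsub
      · rw [h0, map_zero]
      · exact (not_not.1 (mt (hsub β) hβ)).symm
  · ext α
    rw [coeff_remainderOf]
    by_cases hα : α ∈ DeltaBar e
    · rw [Set.indicator_of_mem hα, dif_neg fun ⟨_, hj⟩ => notMem_DeltaBar_of_mem_Delta hj hα]
    · rw [Set.indicator_of_notMem hα]
      rcases hR with h0 | hsub
      · rw [h0, map_zero]
      · exact (not_not.1 (mt (@hsub α) hα)).symm

def divisionMap (g : Fin r → MvPowerSeries (Fin n) k) (e : Fin r → Fin n →₀ ℕ) :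
    ((Fin n →₀ ℕ) → k) →+ MvPowerSeries (Fin n) k where
  toFun v := ∑ j, quotientOf e v j * g j + remainderOf e v
  map_zero' := by
    have hq : ∀ j, quotientOf e (0 : (Fin n →₀ ℕ) → k) j = 0 := fun j => by
      ext β; simp [coeff_quotientOf]
    have hR : remainderOf e (0 : (Fin n →₀ ℕ) → k) = 0 := by
      ext β; simp [coeff_remainderOf]
    simp only [hq, hR, zero_mul, Finset.sum_const_zero, add_zero]
  map_add' v w := by
    have hq : ∀ j, quotientOf e (v + w) j = quotientOf e v j + quotientOf e w j := fun j => by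
      ext β; simp [coeff_quotientOf, Set.indicator_add']
    have hR : remainderOf e (v + w) = remainderOf e v + remainderOf e w := by
      ext β; simp [coeff_remainderOf, Set.indicator_add']
    simp only [hq, hR, add_mul, Finset.sum_add_distrib]
    abel

theorem divisionMap_apply (g : Fin r → MvPowerSeries (Fin n) k) (v : (Fin n →₀ ℕ) → k) :
    divisionMap g e v = ∑ j, quotientOf e v j * g j + remainderOf e v :=
  rfl

theorem coeff_quotientOf_mul {lt : (Fin n →₀ ℕ) → (Fin n →₀ ℕ) → Prop} (hlt : IsMonomialOrder lt)
    {g : Fin r → MvPowerSeries (Fin n) k} {j : Fin r} (he : IsExp lt (g j) (e j))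
    {w : (Fin n →₀ ℕ) → k} {α : Fin n →₀ ℕ} (hw : ∀ β, lt α β → w β = 0) :
    coeff α (quotientOf e w j * g j) = (Delta e j).indicator w α * coeff (e j) (g j) := by
  rw [coeff_mul_of_isExp hlt he fun β hβ => by simp [coeff_quotientOf, hw _ hβ]]
  split_ifs with hle
  · rw [coeff_quotientOf, tsub_add_cancel_of_le hle]
  · rw [Set.indicator_of_notMem fun h => hle (le_of_mem_Delta h), zero_mul]

end DivisionMap

theorem divisionMap_triangular {n r : ℕ} {k : Type*} [CommSemiring k] [Nontrivial k]
    {lt : (Fin n →₀ ℕ) → (Fin n →₀ ℕ) → Prop} (hlt : IsMonomialOrder lt)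
    {g : Fin r → MvPowerSeries (Fin n) k} {e : Fin r → Fin n →₀ ℕ}
    (he : ∀ j, IsExp lt (g j) (e j)) (α : Fin n →₀ ℕ) :
    ∃ c ≠ 0, ∀ w : (Fin n →₀ ℕ) → k, (∀ β, lt α β → w β = 0) →
      coeff α (divisionMap g e w) = c * w α := by
  have hcoeff : ∀ w : (Fin n →₀ ℕ) → k, (∀ β, lt α β → w β = 0) →
      coeff α (divisionMap g e w) =
        ∑ j, (Delta e j).indicator w α * coeff (e j) (g j) + (DeltaBar e).indicator w α :=
    fun w hw => by
      rw [divisionMap_apply, map_add, map_sum, coeff_remainderOf]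
      simp only [coeff_quotientOf_mul hlt (he _) hw]
  by_cases hα : α ∈ DeltaBar e
  · refine ⟨1, one_ne_zero, fun w hw => ?_⟩
    rw [hcoeff w hw, Finset.sum_eq_zero fun j _ => by
        rw [Set.indicator_of_notMem fun h => notMem_DeltaBar_of_mem_Delta h hα, zero_mul],
      zero_add, Set.indicator_of_mem hα, one_mul]
  · obtain ⟨j, hj⟩ := exists_mem_Delta_of_notMem_DeltaBar hα
    refine ⟨coeff (e j) (g j), (he j).1, fun w hw => ?_⟩
    rw [hcoeff w hw, Finset.sum_eq_single j (fun i _ hij => by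
        rw [Set.indicator_of_notMem fun h => hij (eq_of_mem_Delta h hj), zero_mul])
        (by simp), Set.indicator_of_mem hj, Set.indicator_of_notMem hα, add_zero, mul_comm]

theorem division_theorem_general {n : ℕ} (k : Type) [Field k]
    (lt : (Fin n →₀ ℕ) → (Fin n →₀ ℕ) → Prop) (hlt : IsLocalMonomialOrder lt)
    {r : ℕ} (g : Fin r → MvPowerSeries (Fin n) k)
    (e : Fin r → (Fin n →₀ ℕ)) (he : ∀ j, IsExp lt (g j) (e j))
    (f : MvPowerSeries (Fin n) k) :
    ∃! qR : (Fin r → MvPowerSeries (Fin n) k) × MvPowerSeries (Fin n) k,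
      f = (∑ j, qR.1 j * g j) + qR.2 ∧ QuotCond e qR.1 ∧ RemCond e qR.2 := by
  -- `MvPowerSeries (Fin n) k` is by definition `(Fin n →₀ ℕ) → k`, so `divisionMap g e` is an
  -- endomorphism of coefficient functions, triangular with respect to `≻`.
  have hbij : Function.Bijective (divisionMap g e) :=
    (divisionMap g e).bijective_of_triangular hlt.wellFounded_flip
      (divisionMap_triangular hlt.toIsMonomialOrder he)
  obtain ⟨v, hv⟩ := hbij.2 f
  refine ⟨(quotientOf e v, remainderOf e v),
    ⟨hv.symm, quotCond_quotientOf v, remCond_remainderOf v⟩, ?_⟩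
  rintro ⟨q, R⟩ ⟨hf, hq, hR⟩
  obtain ⟨w, rfl, rfl⟩ := exists_eq_quotientOf_remainderOf hq hR
  rw [hbij.1 (hf.symm.trans hv.symm)]

/-- Division theorem: for nonzero `g_1, …, g_r` in `k[[x]]` and the partition
`Δ_1, …, Δ_r, Δ̄` of `ℕ^n` associated with the `exp(g_j)`, every `f ∈ k[[x]]` has a unique
writing `f = ∑ q_j g_j + R` with `q_j = 0` or `ND(q_j) + exp(g_j) ⊆ Δ_j`, and `R = 0` or
`ND(R) ⊆ Δ̄`. -/
theorem division_theorem {n : ℕ} (hn : 1 ≤ n) (k : Type) [Field k]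
    (lt : (Fin n →₀ ℕ) → (Fin n →₀ ℕ) → Prop) (hlt : IsLocalMonomialOrder lt)
    {r : ℕ} (g : Fin r → MvPowerSeries (Fin n) k) (hg : ∀ j, g j ≠ 0)
    (e : Fin r → (Fin n →₀ ℕ)) (he : ∀ j, IsExp lt (g j) (e j))
    (f : MvPowerSeries (Fin n) k) :
    ∃! qR : (Fin r → MvPowerSeries (Fin n) k) × MvPowerSeries (Fin n) k,
      f = (∑ j, qR.1 j * g j) + qR.2 ∧ QuotCond e qR.1 ∧ RemCond e qR.2 :=
  division_theorem_general k lt hlt g e he f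
end
end

section
/- Let k be a field, Q a prime ideal of k[a] = k[a_1,…,a_m], and J an ideal of k[a,x] = k[a_1,…,a_m,x_1,…,x_n]; set J̃ = J + Q·k[a,x]. Let G be a minimal Gröbner basis of J̃ with respect to the block well order < (defined from a monomial well order ≺ on the x-exponents and a monomial well order <₀ on the a-exponents). Then for every g ∈ G: lc_≺(g) ∈ Q if and only if g lies in Q, i.e. g is a polynomial in the variables a alone and belongs to Q (in which case g = lc_≺(g)). -/
/-! If `lc_≺(g) ∈ Q`, then `lc_≺(g)` itself lies in `J̃`, and in the block order its leading
exponent is `(d, 0)`, where `(d, e) = exp_<(g)`. Hence `(d, 0)` lies above the leading exponent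
of some basis element `g'`, which then also lies below `exp_<(g)`; minimality gives `g' = g`, so
`(d, e)` divides `(d, 0)` and `e = 0`. As `0` is `≺`-least, `exp_≺(g) = 0` means that `g`
involves no `x`-variable, i.e. `g = lc_≺(g) ∈ Q`. -/

noncomputable section

/-- `e + ℕ^σ` inside the exponent monoid `σ →₀ ℕ`. -/
def upSetG {σ : Type*} (e : σ →₀ ℕ) : Set (σ →₀ ℕ) := {α | ∃ γ, α = e + γ}

/-- `e` is the `lt`-greatest exponent of the nonzero polynomial `f`. -/
def IsExpP {σ : Type*} {k : Type*} [CommSemiring k]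
    (lt : (σ →₀ ℕ) → (σ →₀ ℕ) → Prop) (f : MvPolynomial σ k) (e : σ →₀ ℕ) : Prop :=
  e ∈ f.support ∧ ∀ β ∈ f.support, β ≠ e → lt β e

/-- The set of `lt`-leading exponents of the nonzero elements of an ideal of polynomials. -/
def ExpSetP {σ : Type*} {k : Type*} [CommSemiring k]
    (lt : (σ →₀ ℕ) → (σ →₀ ℕ) → Prop) (I : Ideal (MvPolynomial σ k)) : Set (σ →₀ ℕ) :=
  {e | ∃ f ∈ I, IsExpP lt f e}

/-- The `x`-part of an exponent of `k[a,x]`. -/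
def xpart {m n : ℕ} (μ : (Fin m ⊕ Fin n) →₀ ℕ) : Fin n →₀ ℕ :=
  (Finsupp.sumFinsuppEquivProdFinsupp μ).2

/-- The `a`-part of an exponent of `k[a,x]`. -/
def apart {m n : ℕ} (μ : (Fin m ⊕ Fin n) →₀ ℕ) : Fin m →₀ ℕ :=
  (Finsupp.sumFinsuppEquivProdFinsupp μ).1

/-- `e` is the `prec`-greatest `x`-exponent `exp_≺(f)` occurring in `f ∈ k[a,x]`. -/
def IsExpX {m n : ℕ} {k : Type*} [CommSemiring k]
    (prec : (Fin n →₀ ℕ) → (Fin n →₀ ℕ) → Prop)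
    (f : MvPolynomial (Fin m ⊕ Fin n) k) (e : Fin n →₀ ℕ) : Prop :=
  (∃ μ ∈ f.support, xpart μ = e) ∧ ∀ μ ∈ f.support, xpart μ ≠ e → prec (xpart μ) e

/-- `lc_≺(f) ∈ k[a]`: the coefficient of `x^e` in `f ∈ k[a,x]` viewed as a polynomial in
`x` over `k[a]`. -/
def lcx {m n : ℕ} {k : Type*} [CommSemiring k]
    (f : MvPolynomial (Fin m ⊕ Fin n) k) (e : Fin n →₀ ℕ) : MvPolynomial (Fin m) k :=
  ∑ μ ∈ f.support.filter (fun μ => xpart μ = e),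
    MvPolynomial.monomial (apart μ) (MvPolynomial.coeff μ f)

/-- The block order `<` on the exponents of `k[a,x]` built from `prec` (on the `x`-part)
and `lt0` (on the `a`-part). -/
def blockLt {m n : ℕ} (prec : (Fin n →₀ ℕ) → (Fin n →₀ ℕ) → Prop)
    (lt0 : (Fin m →₀ ℕ) → (Fin m →₀ ℕ) → Prop)
    (μ μ' : (Fin m ⊕ Fin n) →₀ ℕ) : Prop :=
  prec (xpart μ) (xpart μ') ∨ (xpart μ = xpart μ' ∧ lt0 (apart μ) (apart μ'))

/-- The embedding `k[a] → k[a,x]`. -/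
def embA {m n : ℕ} {k : Type*} [CommSemiring k] :
    MvPolynomial (Fin m) k →+* MvPolynomial (Fin m ⊕ Fin n) k :=
  (MvPolynomial.rename (Sum.inl : Fin m → Fin m ⊕ Fin n)).toRingHom

section OrderFacts

variable {α : Type*} {r : α → α → Prop}

lemma Finset.exists_forall_rel_of_total (htot : ∀ a b, r a b ∨ a = b ∨ r b a)
    (htr : ∀ a b c, r a b → r b c → r a c) {s : Finset α} (hs : s.Nonempty) :
    ∃ e ∈ s, ∀ b ∈ s, b ≠ e → r b e := by
  let _ : LE α := ⟨r⟩
  have : IsTrans α (· ≤ ·) := ⟨htr⟩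
  obtain ⟨e, he, hmax⟩ := s.exists_maximal hs
  refine ⟨e, he, fun b hb hbe => ?_⟩
  rcases htot b e with h | rfl | h
  · exact h
  · exact absurd rfl hbe
  · exact hmax hb h

lemma IsWellMonomialOrder.not_lt_zero {M : Type*} [AddCommMonoid M] {lt : M → M → Prop}
    (h : IsWellMonomialOrder lt) (a : M) : ¬ lt a 0 := fun ha =>
  (h.zero_le a).elim (fun h0 => h.irrefl 0 (h0 ▸ ha)) (fun h0 => h.irrefl 0 (h.trans _ _ _ h0 ha))

end OrderFacts

section LeadingExponents

variable {σ : Type*} {k : Type*} [CommSemiring k] {lt : (σ →₀ ℕ) → (σ →₀ ℕ) → Prop}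

lemma exists_isExpP (htot : ∀ a b, lt a b ∨ a = b ∨ lt b a)
    (htr : ∀ a b c, lt a b → lt b c → lt a c) {f : MvPolynomial σ k} (hf : f ≠ 0) :
    ∃ e, IsExpP lt f e := by
  obtain ⟨e, he, hmax⟩ :=
    Finset.exists_forall_rel_of_total htot htr (MvPolynomial.support_nonempty.mpr hf)
  exact ⟨e, he, hmax⟩

lemma IsExpP.unique (htr : ∀ a b c, lt a b → lt b c → lt a c) (hirr : ∀ a, ¬ lt a a)
    {f : MvPolynomial σ k} {ε ε' : σ →₀ ℕ} (h : IsExpP lt f ε) (h' : IsExpP lt f ε') :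
    ε = ε' := by
  by_contra hne
  exact hirr _ (htr _ _ _ (h'.2 ε h.1 hne) (h.2 ε' h'.1 (Ne.symm hne)))

lemma upSetG_trans {ε ν μ : σ →₀ ℕ} (hν : ν ∈ upSetG ε) (hμ : μ ∈ upSetG ν) :
    μ ∈ upSetG ε := by
  obtain ⟨γ, rfl⟩ := hν
  obtain ⟨γ', rfl⟩ := hμ
  exact ⟨γ + γ', add_assoc _ _ _⟩

lemma mem_upSetG_of_minimal (htr : ∀ a b c, lt a b → lt b c → lt a c) (hirr : ∀ a, ¬ lt a a)
    {I : Ideal (MvPolynomial σ k)} {G : Finset (MvPolynomial σ k)}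
    (hGB : ExpSetP lt I = ⋃ g ∈ G, {μ | ∃ ε, IsExpP lt g ε ∧ μ ∈ upSetG ε})
    (hmin : ∀ g ∈ G, ∀ g' ∈ G, g ≠ g' → ∀ ε ε',
      IsExpP lt g ε → IsExpP lt g' ε' → ε ∉ upSetG ε')
    {g : MvPolynomial σ k} (hg : g ∈ G) {ε ν : σ →₀ ℕ} (hε : IsExpP lt g ε)
    (hν : ν ∈ ExpSetP lt I) (hεν : ε ∈ upSetG ν) : ν ∈ upSetG ε := by
  rw [hGB] at hν
  simp only [Set.mem_iUnion] at hν
  obtain ⟨g', hg', ε', hε', hνε'⟩ := hν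
  obtain rfl : g = g' := by
    by_contra hne
    exact hmin g hg g' hg' hne ε ε' hε hε' (upSetG_trans hνε' hεν)
  rwa [hε'.unique htr hirr hε] at hνε'

end LeadingExponents

section BlockExponents

variable {m n : ℕ}

def joinExp (d : Fin m →₀ ℕ) (e : Fin n →₀ ℕ) : (Fin m ⊕ Fin n) →₀ ℕ :=
  Finsupp.sumFinsuppEquivProdFinsupp.symm (d, e)

@[simp]
lemma apart_joinExp (d : Fin m →₀ ℕ) (e : Fin n →₀ ℕ) : apart (joinExp d e) = d := by
  rw [apart, joinExp, Equiv.apply_symm_apply]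

@[simp]
lemma xpart_joinExp (d : Fin m →₀ ℕ) (e : Fin n →₀ ℕ) : xpart (joinExp d e) = e := by
  rw [xpart, joinExp, Equiv.apply_symm_apply]

@[simp]
lemma joinExp_apart_xpart (μ : (Fin m ⊕ Fin n) →₀ ℕ) : joinExp (apart μ) (xpart μ) = μ := by
  rw [apart, xpart, joinExp, Prod.mk.eta, Equiv.symm_apply_apply]

lemma xpart_add (μ ν : (Fin m ⊕ Fin n) →₀ ℕ) : xpart (μ + ν) = xpart μ + xpart ν :=
  congrArg Prod.snd (map_add Finsupp.sumFinsuppAddEquivProdFinsupp μ ν)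

lemma joinExp_mem_upSetG_joinExp_zero (d : Fin m →₀ ℕ) (e : Fin n →₀ ℕ) :
    joinExp d e ∈ upSetG (joinExp d 0) :=
  ⟨joinExp 0 e, by
    simp only [joinExp, Finsupp.sumFinsuppEquivProdFinsupp_symm_apply, ← Finsupp.sumElim_add,
      add_zero, zero_add]⟩

lemma mapDomain_inl_eq_joinExp (d : Fin m →₀ ℕ) :
    Finsupp.mapDomain Sum.inl d = joinExp d (0 : Fin n →₀ ℕ) := by
  rw [joinExp, Finsupp.sumFinsuppEquivProdFinsupp_symm_apply, ← Finsupp.embDomain_inl]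
  exact (Finsupp.embDomain_eq_mapDomain Function.Embedding.inl d).symm

variable {prec : (Fin n →₀ ℕ) → (Fin n →₀ ℕ) → Prop} {lt0 : (Fin m →₀ ℕ) → (Fin m →₀ ℕ) → Prop}

lemma blockLt_trans (hprec : IsMonomialOrder prec) (hlt0 : IsMonomialOrder lt0) :
    ∀ a b c, blockLt prec lt0 a b → blockLt prec lt0 b c → blockLt prec lt0 a c := by
  rintro a b c (h₁ | ⟨h₁, h₁'⟩) (h₂ | ⟨h₂, h₂'⟩)
  · exact Or.inl (hprec.trans _ _ _ h₁ h₂)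
  · exact Or.inl (h₂ ▸ h₁)
  · exact Or.inl (h₁ ▸ h₂)
  · exact Or.inr ⟨h₁.trans h₂, hlt0.trans _ _ _ h₁' h₂'⟩

lemma blockLt_irrefl (hprec : IsMonomialOrder prec) (hlt0 : IsMonomialOrder lt0) :
    ∀ a, ¬ blockLt prec lt0 a a := by
  rintro a (h | ⟨-, h⟩)
  · exact hprec.irrefl _ h
  · exact hlt0.irrefl _ h

end BlockExponents

section CoefficientsInA

open MvPolynomial

variable {m n : ℕ} {k : Type*} [CommSemiring k]

lemma coeff_embA_joinExp (p : MvPolynomial (Fin m) k) (d : Fin m →₀ ℕ) :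
    coeff (joinExp d 0) (embA (n := n) p) = coeff d p := by
  rw [← mapDomain_inl_eq_joinExp]
  exact coeff_rename_mapDomain _ Sum.inl_injective p d

lemma exists_eq_joinExp_of_mem_support_embA {p : MvPolynomial (Fin m) k}
    {μ : (Fin m ⊕ Fin n) →₀ ℕ} (hμ : μ ∈ (embA p).support) : ∃ d ∈ p.support, μ = joinExp d 0 := by
  obtain ⟨d, rfl, hd⟩ := coeff_rename_ne_zero _ _ _ (mem_support_iff.mp hμ)
  exact ⟨d, mem_support_iff.mpr hd, mapDomain_inl_eq_joinExp d⟩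

lemma xpart_eq_zero_of_mem_support_embA {p : MvPolynomial (Fin m) k}
    {μ : (Fin m ⊕ Fin n) →₀ ℕ} (hμ : μ ∈ (embA p).support) : xpart μ = 0 := by
  obtain ⟨d, -, rfl⟩ := exists_eq_joinExp_of_mem_support_embA hμ
  exact xpart_joinExp d 0

lemma coeff_lcx (g : MvPolynomial (Fin m ⊕ Fin n) k) (e : Fin n →₀ ℕ) (d : Fin m →₀ ℕ) :
    coeff d (lcx g e) = coeff (joinExp d e) g := by
  classical
  rw [lcx, coeff_sum, Finset.sum_eq_single (joinExp d e)]
  · simp only [apart_joinExp, coeff_monomial, if_pos]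
  · intro μ hμ hne
    rw [coeff_monomial, if_neg]
    rintro rfl
    exact hne (by rw [← (Finset.mem_filter.mp hμ).2, joinExp_apart_xpart])
  · intro hnot
    rw [coeff_monomial, if_pos (apart_joinExp d e), ← notMem_support_iff]
    exact fun hmem => hnot (Finset.mem_filter.mpr ⟨hmem, xpart_joinExp d e⟩)

lemma lcx_embA (p : MvPolynomial (Fin m) k) : lcx (embA (n := n) p) 0 = p := by
  ext d
  rw [coeff_lcx, coeff_embA_joinExp]

variable {prec : (Fin n →₀ ℕ) → (Fin n →₀ ℕ) → Prop} {lt0 : (Fin m →₀ ℕ) → (Fin m →₀ ℕ) → Prop}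

lemma IsExpX.eq_zero_of_embA {p : MvPolynomial (Fin m) k} {e : Fin n →₀ ℕ}
    (h : IsExpX prec (embA p) e) : e = 0 := by
  obtain ⟨μ, hμ, rfl⟩ := h.1
  exact xpart_eq_zero_of_mem_support_embA hμ

lemma IsExpX.lcx_ne_zero {g : MvPolynomial (Fin m ⊕ Fin n) k} {e : Fin n →₀ ℕ}
    (h : IsExpX prec g e) : lcx g e ≠ 0 := by
  obtain ⟨μ, hμ, rfl⟩ := h.1
  refine ne_zero_iff.mpr ⟨apart μ, ?_⟩
  rw [coeff_lcx, joinExp_apart_xpart]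
  exact mem_support_iff.mp hμ

lemma isExpP_embA {p : MvPolynomial (Fin m) k} {d : Fin m →₀ ℕ} (hd : IsExpP lt0 p d) :
    IsExpP (blockLt prec lt0) (embA p) (joinExp d 0) := by
  refine ⟨mem_support_iff.mpr ?_, fun ν hν hne => ?_⟩
  · rw [coeff_embA_joinExp]
    exact mem_support_iff.mp hd.1
  · obtain ⟨u, hu, rfl⟩ := exists_eq_joinExp_of_mem_support_embA hν
    refine Or.inr ⟨by simp, ?_⟩
    simp only [apart_joinExp]
    exact hd.2 u hu (fun h => hne (h ▸ rfl))

lemma IsExpX.isExpP_joinExp {g : MvPolynomial (Fin m ⊕ Fin n) k} {e : Fin n →₀ ℕ}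
    {d : Fin m →₀ ℕ} (hex : IsExpX prec g e) (hd : IsExpP lt0 (lcx g e) d) :
    IsExpP (blockLt prec lt0) g (joinExp d e) := by
  refine ⟨mem_support_iff.mpr ?_, fun μ hμ hne => ?_⟩
  · rw [← coeff_lcx]
    exact mem_support_iff.mp hd.1
  by_cases hx : xpart μ = e
  · refine Or.inr ⟨by simp [hx], ?_⟩
    simp only [apart_joinExp]
    refine hd.2 _ (mem_support_iff.mpr ?_) fun h => hne ?_
    · rw [coeff_lcx, ← hx, joinExp_apart_xpart]
      exact mem_support_iff.mp hμ
    · rw [← joinExp_apart_xpart μ, hx, h]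
  · exact Or.inl (by simpa using hex.2 μ hμ hx)

lemma IsExpX.eq_embA_lcx (hprec : IsWellMonomialOrder prec)
    {g : MvPolynomial (Fin m ⊕ Fin n) k} (hex : IsExpX prec g 0) : g = embA (lcx g 0) := by
  have hx : ∀ μ ∈ g.support, xpart μ = 0 := fun μ hμ =>
    by_contra fun hne => hprec.not_lt_zero _ (hex.2 μ hμ hne)
  ext ν
  by_cases hν : xpart ν = 0
  · rw [← joinExp_apart_xpart ν, hν, coeff_embA_joinExp, coeff_lcx]
  · rw [notMem_support_iff.mp (mt (hx ν) hν),
      notMem_support_iff.mp (mt xpart_eq_zero_of_mem_support_embA hν)]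

end CoefficientsInA

theorem lc_in_Q_iff_mem_Q_general {m n : ℕ} (k : Type) [Field k]
    (prec : (Fin n →₀ ℕ) → (Fin n →₀ ℕ) → Prop) (hprec : IsWellMonomialOrder prec)
    (lt0 : (Fin m →₀ ℕ) → (Fin m →₀ ℕ) → Prop) (hlt0 : IsWellMonomialOrder lt0)
    (Q : Ideal (MvPolynomial (Fin m) k))
    (J : Ideal (MvPolynomial (Fin m ⊕ Fin n) k))
    (Jt : Ideal (MvPolynomial (Fin m ⊕ Fin n) k))
    (hJt : Jt = J ⊔ Ideal.map (embA (n := n)) Q)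
    (G : Finset (MvPolynomial (Fin m ⊕ Fin n) k))
    (hGB : ExpSetP (blockLt prec lt0) Jt =
      ⋃ g ∈ G, {μ | ∃ ε, IsExpP (blockLt prec lt0) g ε ∧ μ ∈ upSetG ε})
    (hmin : ∀ g ∈ G, ∀ g' ∈ G, g ≠ g' → ∀ ε ε',
      IsExpP (blockLt prec lt0) g ε → IsExpP (blockLt prec lt0) g' ε' → ε ∉ upSetG ε') :
    ∀ g ∈ G, ∀ e, IsExpX prec g e →
      ((lcx g e ∈ Q ↔ ∃ p ∈ Q, g = embA p) ∧
        (lcx g e ∈ Q → g = embA (lcx g e))) := by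
  intro g hg e hex
  have key : lcx g e ∈ Q → g = embA (lcx g e) := by
    intro hlc
    obtain ⟨d, hd⟩ := exists_isExpP hlt0.total hlt0.trans hex.lcx_ne_zero
    have hlc_exp : joinExp d 0 ∈ ExpSetP (blockLt prec lt0) Jt :=
      ⟨embA (lcx g e), hJt ▸ Ideal.mem_sup_right (Ideal.mem_map_of_mem _ hlc), isExpP_embA hd⟩
    obtain ⟨γ, hγ⟩ := mem_upSetG_of_minimal
      (blockLt_trans hprec.toIsMonomialOrder hlt0.toIsMonomialOrder)
      (blockLt_irrefl hprec.toIsMonomialOrder hlt0.toIsMonomialOrder)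
      hGB hmin hg (hex.isExpP_joinExp hd) hlc_exp (joinExp_mem_upSetG_joinExp_zero d e)
    obtain rfl : e = 0 := by
      have hx := congrArg xpart hγ
      rw [xpart_add, xpart_joinExp, xpart_joinExp] at hx
      exact (add_eq_zero.mp hx.symm).1
    exact hex.eq_embA_lcx hprec
  refine ⟨⟨fun hlc => ⟨_, hlc, key hlc⟩, ?_⟩, key⟩
  rintro ⟨p, hp, rfl⟩
  rwa [hex.eq_zero_of_embA, lcx_embA]

/-- for a minimal Gröbner basis `G` of `J̃ = J + Q·k[a,x]` with respect to
the block well order `<`, every `g ∈ G` satisfies: `lc_≺(g) ∈ Q` iff `g` is a polynomial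
in the variables `a` alone belonging to `Q`, in which case `g = lc_≺(g)`. -/
theorem lc_in_Q_iff_mem_Q {m n : ℕ} (k : Type) [Field k]
    (prec : (Fin n →₀ ℕ) → (Fin n →₀ ℕ) → Prop) (hprec : IsWellMonomialOrder prec)
    (lt0 : (Fin m →₀ ℕ) → (Fin m →₀ ℕ) → Prop) (hlt0 : IsWellMonomialOrder lt0)
    (Q : Ideal (MvPolynomial (Fin m) k)) (hQ : Q.IsPrime)
    (J : Ideal (MvPolynomial (Fin m ⊕ Fin n) k))
    (Jt : Ideal (MvPolynomial (Fin m ⊕ Fin n) k))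
    (hJt : Jt = J ⊔ Ideal.map (embA (n := n)) Q)
    (G : Finset (MvPolynomial (Fin m ⊕ Fin n) k))
    (hGJt : ∀ g ∈ G, g ∈ Jt) (hGne : ∀ g ∈ G, g ≠ 0)
    (hGB : ExpSetP (blockLt prec lt0) Jt =
      ⋃ g ∈ G, {μ | ∃ ε, IsExpP (blockLt prec lt0) g ε ∧ μ ∈ upSetG ε})
    (hmin : ∀ g ∈ G, ∀ g' ∈ G, g ≠ g' → ∀ ε ε',
      IsExpP (blockLt prec lt0) g ε → IsExpP (blockLt prec lt0) g' ε' → ε ∉ upSetG ε') :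
    ∀ g ∈ G, ∀ e, IsExpX prec g e →
      ((lcx g e ∈ Q ↔ ∃ p ∈ Q, g = embA p) ∧
        (lcx g e ∈ Q → g = embA (lcx g e))) :=
  lc_in_Q_iff_mem_Q_general k prec hprec lt0 hlt0 Q J Jt hJt G hGB hmin
end
end

section
/- Let k be a field and ≺ a monomial order on ℕ^n, i.e. a linear order compatible with addition (not necessarily a well order). Define the order ≺^z on ℕ^n × ℕ by (α,k₁) ≺^z (α',k₁') iff |α|+k₁ < |α'|+k₁', or |α|+k₁ = |α'|+k₁' and α ≺ α'. Let I ⊆ k[x] be the ideal generated by nonzero polynomials f_1,…,f_q, and let h(I) ⊆ k[x,z] be the ideal generated by the homogenizations h(f_1),…,h(f_q). Let G be a finite set of nonzero homogeneous polynomials of k[x,z] which is a ≺^z-standard basis of h(I), in the sense that every nonzero F ∈ h(I) admits a representation F = ∑_{g∈G} q_g g with q_g ∈ k[x,z] and exp_{≺^z}(q_g g) ≼^z exp_{≺^z}(F) whenever q_g ≠ 0. Then G|_{z=1} = {g(x,1) : g ∈ G} is a ≺-standard basis of I: every nonzero f ∈ I admits a representation f = ∑_{g∈G} q_g·g(x,1)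 with q_g ∈ k[x] and exp_≺(q_g·g(x,1)) ≼ exp_≺(f) whenever q_g ≠ 0. -/
set_option maxHeartbeats 1000000

noncomputable section

/-- The total degree `|α| + k₁` of an exponent `x^α z^{k₁}` of `k[x,z]`
(`z` is indexed by `none`). -/
def degO {n : ℕ} (μ : Option (Fin n) →₀ ℕ) : ℕ := μ.sum fun _ c => c

/-- The order `≺^z` on the exponents of `k[x,z]`: first by total degree, ties broken by
`prec` on the `x`-part. -/
def ltz {n : ℕ} (prec : (Fin n →₀ ℕ) → (Fin n →₀ ℕ) → Prop)
    (μ μ' : Option (Fin n) →₀ ℕ) : Prop :=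
  degO μ < degO μ' ∨ (degO μ = degO μ' ∧ prec μ.some μ'.some)

/-- The homogenization `h(f) ∈ k[x,z]` of `f ∈ k[x]` (with `z` indexed by `none`):
`h(f) = ∑_α c_α x^α z^{d−|α|}` where `d = deg f`. -/
def homog {n : ℕ} {k : Type*} [CommSemiring k] (f : MvPolynomial (Fin n) k) :
    MvPolynomial (Option (Fin n)) k :=
  ∑ α ∈ f.support,
    MvPolynomial.monomial
      (Finsupp.mapDomain some α +
        Finsupp.single (none : Option (Fin n)) (f.totalDegree - α.sum fun _ c => c))
      (MvPolynomial.coeff α f)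

/-- The substitution `z = 1`, `k[x,z] → k[x]`. -/
def dehom {n : ℕ} {k : Type*} [CommSemiring k] :
    MvPolynomial (Option (Fin n)) k →+* MvPolynomial (Fin n) k :=
  MvPolynomial.eval₂Hom MvPolynomial.C (fun o => o.elim 1 MvPolynomial.X)


open MvPolynomial Finsupp

section Helpers

variable {n : ℕ} {k : Type*} [CommSemiring k]


lemma degO_eq_degree (μ : Option (Fin n) →₀ ℕ) : degO μ = μ.degree := rfl

lemma degO_add (μ ν : Option (Fin n) →₀ ℕ) : degO (μ + ν) = degO μ + degO ν := by
  simpa [degO] using Finsupp.sum_add_index' (h := fun (_ : Option (Fin n)) (c : ℕ) => c)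
    (fun _ => rfl) (fun _ _ _ => rfl)

lemma degO_single (e : ℕ) : degO (Finsupp.single (none : Option (Fin n)) e) = e := by
  simp [degO, Finsupp.sum_single_index]

lemma degO_mapDomain (α : Fin n →₀ ℕ) :
    degO (Finsupp.mapDomain some α) = α.sum fun _ c => c :=
  Finsupp.sum_mapDomain_index (fun _ => rfl) (fun _ _ _ => rfl)

lemma option_decomp (μ : Option (Fin n) →₀ ℕ) :
    μ = Finsupp.mapDomain some μ.some + Finsupp.single none (μ none) := by
  ext o
  cases o with
  | none =>
    rw [Finsupp.add_apply, Finsupp.mapDomain_notin_range _ _ (by simp),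
      Finsupp.single_eq_same, zero_add]
  | some i =>
    rw [Finsupp.add_apply, Finsupp.mapDomain_apply (Option.some_injective _),
      Finsupp.some_apply, Finsupp.single_eq_of_ne (by simp), add_zero]

lemma some_mapDomain (α : Fin n →₀ ℕ) : (Finsupp.mapDomain some α).some = α := by
  ext i
  rw [Finsupp.some_apply, Finsupp.mapDomain_apply (Option.some_injective _)]

lemma dehom_monomial (μ : Option (Fin n) →₀ ℕ) (c : k) :
    dehom (monomial μ c) = monomial μ.some c := by
  rw [dehom, coe_eval₂Hom, eval₂_monomial, monomial_eq]
  congr 1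
  conv_lhs => rw [option_decomp μ]
  rw [Finsupp.prod_add_index' (by intro o; simp) (by intro o a b; rw [pow_add]),
    Finsupp.prod_single_index (by simp), Finsupp.prod_mapDomain_index (fun _ => rfl) ?hadd]
  · simp
  · intro i a b; rw [pow_add]

lemma dehom_homog (g : MvPolynomial (Fin n) k) : dehom (homog g) = g := by
  rw [homog, map_sum]
  conv_rhs => rw [← support_sum_monomial_coeff g]
  refine Finset.sum_congr rfl fun α hα => ?_
  rw [dehom_monomial, Finsupp.some_add, some_mapDomain, Finsupp.some_single_none, add_zero]

lemma homog_isHomogeneous (g : MvPolynomial (Fin n) k) :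
    (homog g).IsHomogeneous g.totalDegree := by
  refine IsHomogeneous.sum _ _ _ fun α hα => ?_
  refine isHomogeneous_monomial _ ?_
  rw [← degO_eq_degree, degO_add, degO_mapDomain, degO_single]
  have := le_totalDegree hα
  omega

lemma degO_of_mem_support {P : MvPolynomial (Option (Fin n)) k} {D : ℕ}
    (hP : P.IsHomogeneous D) {μ : Option (Fin n) →₀ ℕ} (hμ : μ ∈ P.support) : degO μ = D := by
  rw [degO_eq_degree]
  by_contra h
  exact (MvPolynomial.mem_support_iff.mp hμ) (hP.coeff_eq_zero h)

lemma homogComp_mul {P : MvPolynomial (Option (Fin n)) k} {d : ℕ} (hP : P.IsHomogeneous d)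
    (Q : MvPolynomial (Option (Fin n)) k) (D : ℕ) :
    homogeneousComponent D (Q * P) =
      (if d ≤ D then homogeneousComponent (D - d) Q else 0) * P := by
  conv_lhs => rw [← sum_homogeneousComponent Q]
  rw [Finset.sum_mul, map_sum]
  have heach : ∀ e, homogeneousComponent D (homogeneousComponent e Q * P) =
      if D = e + d then homogeneousComponent e Q * P else 0 := fun e =>
    homogeneousComponent_of_mem ((mem_homogeneousSubmodule _ _).2
      ((homogeneousComponent_isHomogeneous e Q).mul hP))
  simp_rw [heach]
  by_cases hd : d ≤ D
  · rw [if_pos hd, Finset.sum_eq_single (D - d)]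
    · rw [if_pos (by omega)]
    · intro b _ hb
      rw [if_neg (by omega)]
    · intro hmem
      rw [homogeneousComponent_eq_zero _ _ (by
        simp only [Finset.mem_range, not_lt] at hmem; omega), zero_mul, if_pos (by omega)]
  · rw [if_neg hd, Finset.sum_eq_zero, zero_mul]
    intro b _
    rw [if_neg (by omega)]

lemma degO_split (μ : Option (Fin n) →₀ ℕ) :
    degO μ = (μ.some.sum fun _ c => c) + μ none := by
  conv_lhs => rw [option_decomp μ]
  rw [degO_add, degO_mapDomain, degO_single]

lemma eq_of_degO_some {μ μ' : Option (Fin n) →₀ ℕ} (h1 : degO μ = degO μ')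
    (h2 : μ.some = μ'.some) : μ = μ' := by
  have h3 : μ none = μ' none := by
    have := degO_split μ
    rw [h1, degO_split μ', h2] at this
    omega
  rw [option_decomp μ, option_decomp μ', h2, h3]

lemma coeff_dehom (P : MvPolynomial (Option (Fin n)) k) (β : Fin n →₀ ℕ) :
    coeff β (dehom P) = ∑ μ ∈ P.support, if μ.some = β then coeff μ P else 0 := by
  conv_lhs => rw [← support_sum_monomial_coeff P, map_sum, coeff_sum]
  refine Finset.sum_congr rfl fun μ hμ => ?_
  rw [dehom_monomial, coeff_monomial]

lemma dehom_isExpP {prec : (Fin n →₀ ℕ) → (Fin n →₀ ℕ) → Prop}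
    {P : MvPolynomial (Option (Fin n)) k} {D : ℕ} (hP : P.IsHomogeneous D)
    {e : Option (Fin n) →₀ ℕ} (he : IsExpP (ltz prec) P e) :
    IsExpP prec (dehom P) e.some := by
  have hinj : ∀ μ ∈ P.support, ∀ μ' ∈ P.support, μ.some = μ'.some → μ = μ' :=
    fun μ hμ μ' hμ' h => eq_of_degO_some
      (by rw [degO_of_mem_support hP hμ, degO_of_mem_support hP hμ']) h
  have hc : coeff e.some (dehom P) = coeff e P := by
    rw [coeff_dehom, Finset.sum_eq_single_of_mem e he.1
      (fun μ hμ hne => if_neg fun hs => hne (hinj μ hμ e he.1 hs)), if_pos rfl]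
  constructor
  · exact MvPolynomial.mem_support_iff.mpr (hc ▸ MvPolynomial.mem_support_iff.mp he.1)
  · intro β hβ hne
    have hex : ∃ μ ∈ P.support, μ.some = β := by
      by_contra h
      push_neg at h
      exact MvPolynomial.mem_support_iff.mp hβ
        (by rw [coeff_dehom]; exact Finset.sum_eq_zero fun μ hμ => if_neg (h μ hμ))
    obtain ⟨μ, hμ, rfl⟩ := hex
    have hμe : μ ≠ e := fun h => hne (by rw [h])
    rcases he.2 μ hμ hμe with hlt | ⟨_, hp⟩
    · exfalso
      rw [degO_of_mem_support hP hμ, degO_of_mem_support hP he.1] at hlt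
      omega
    · exact hp

lemma ltz_trans {prec : (Fin n →₀ ℕ) → (Fin n →₀ ℕ) → Prop}
    (hpt : ∀ a b c, prec a b → prec b c → prec a c)
    (a b c : Option (Fin n) →₀ ℕ) (h1 : ltz prec a b) (h2 : ltz prec b c) :
    ltz prec a c := by
  rcases h1 with h1 | ⟨h1, h1p⟩ <;> rcases h2 with h2 | ⟨h2, h2p⟩
  · exact Or.inl (by omega)
  · exact Or.inl (by omega)
  · exact Or.inl (by omega)
  · exact Or.inr ⟨by omega, hpt _ _ _ h1p h2p⟩

lemma ltz_total {prec : (Fin n →₀ ℕ) → (Fin n →₀ ℕ) → Prop}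
    (hpt : ∀ a b, prec a b ∨ a = b ∨ prec b a)
    (a b : Option (Fin n) →₀ ℕ) : ltz prec a b ∨ a = b ∨ ltz prec b a := by
  rcases Nat.lt_trichotomy (degO a) (degO b) with h | h | h
  · exact Or.inl (Or.inl h)
  · rcases hpt a.some b.some with hp | hp | hp
    · exact Or.inl (Or.inr ⟨h, hp⟩)
    · exact Or.inr (Or.inl (eq_of_degO_some h hp))
    · exact Or.inr (Or.inr (Or.inr ⟨h.symm, hp⟩))
  · exact Or.inr (Or.inr (Or.inl h))

lemma exists_max {M : Type*} (lt : M → M → Prop)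
    (htotal : ∀ a b, lt a b ∨ a = b ∨ lt b a)
    (htrans : ∀ a b c, lt a b → lt b c → lt a c) :
    ∀ s : Finset M, s.Nonempty → ∃ e ∈ s, ∀ b ∈ s, b ≠ e → lt b e := by
  classical
  intro s
  induction s using Finset.induction with
  | empty => intro h; simp at h
  | @insert a s ha ih =>
    intro _
    by_cases hs : s.Nonempty
    · obtain ⟨e, hes, hemax⟩ := ih hs
      rcases htotal a e with h | h | h
      · exact ⟨e, Finset.mem_insert_of_mem hes, fun b hb hbe => by
          rcases Finset.mem_insert.mp hb with rfl | hb
          · exact h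
          · exact hemax b hb hbe⟩
      · subst h
        exact ⟨a, Finset.mem_insert_self a s, fun b hb hbe => by
          rcases Finset.mem_insert.mp hb with rfl | hb
          · exact absurd rfl hbe
          · exact hemax b hb hbe⟩
      · exact ⟨a, Finset.mem_insert_self a s, fun b hb hba => by
          rcases Finset.mem_insert.mp hb with rfl | hb
          · exact absurd rfl hba
          · by_cases hbe : b = e
            · exact hbe ▸ h
            · exact htrans b e a (hemax b hb hbe) h⟩
    · rw [Finset.not_nonempty_iff_eq_empty] at hs
      subst hs
      exact ⟨a, Finset.mem_insert_self a ∅, fun b hb hba => by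
        rcases Finset.mem_insert.mp hb with rfl | hb
        · exact absurd rfl hba
        · simp at hb⟩

end Helpers

/-- if `G` is a finite set of nonzero homogeneous polynomials which is a
`≺^z`-standard basis of `h(I)` (the ideal generated by the homogenizations of generators
`f_1, …, f_q` of `I ⊆ k[x]`), then `G|_{z=1}` is a `≺`-standard basis of `I`: every
nonzero `f ∈ I` has a representation `f = ∑ q_g·g(x,1)` with `exp(q_g·g(x,1)) ≼ exp(f)`
whenever `q_g ≠ 0`. -/
theorem dehomogenized_standardBasis {n : ℕ} (k : Type) [Field k]
    (prec : (Fin n →₀ ℕ) → (Fin n →₀ ℕ) → Prop) (hprec : IsMonomialOrder prec)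
    {q : ℕ} (f : Fin q → MvPolynomial (Fin n) k) (hf : ∀ j, f j ≠ 0)
    {r : ℕ} (G : Fin r → MvPolynomial (Option (Fin n)) k)
    (hGne : ∀ i, G i ≠ 0)
    (hGhom : ∀ i, ∃ d, MvPolynomial.IsHomogeneous (G i) d)
    (hGmem : ∀ i, G i ∈ Ideal.span (Set.range fun j => homog (f j)))
    (hGstd : ∀ F ∈ Ideal.span (Set.range fun j => homog (f j)), F ≠ 0 →
      ∃ qc : Fin r → MvPolynomial (Option (Fin n)) k,
        F = (∑ i, qc i * G i) ∧
        ∀ i, qc i = 0 ∨ ∃ ei eF, IsExpP (ltz prec) (qc i * G i) ei ∧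
          IsExpP (ltz prec) F eF ∧ (ei = eF ∨ ltz prec ei eF)) :
    ∀ f0 ∈ Ideal.span (Set.range f), f0 ≠ 0 →
      ∃ qc : Fin r → MvPolynomial (Fin n) k,
        f0 = (∑ i, qc i * dehom (G i)) ∧
        ∀ i, qc i = 0 ∨ ∃ ei e0, IsExpP prec (qc i * dehom (G i)) ei ∧
          IsExpP prec f0 e0 ∧ (ei = e0 ∨ prec ei e0) := by
  intro f0 hf0 hf0ne
  classical
  obtain ⟨a, ha⟩ := (Ideal.mem_span_range_iff_exists_fun).mp hf0
  set D : ℕ := Finset.univ.sup (fun j => (a j).totalDegree + (f j).totalDegree) with hD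
  set F : MvPolynomial (Option (Fin n)) k :=
    ∑ j, MvPolynomial.monomial (Finsupp.single (none : Option (Fin n))
        (D - ((a j).totalDegree + (f j).totalDegree))) (1:k) *
      (homog (a j) * homog (f j)) with hF
  have hFhom : F.IsHomogeneous D := by
    refine IsHomogeneous.sum _ _ _ fun j _ => ?_
    have hle : (a j).totalDegree + (f j).totalDegree ≤ D := by
      rw [hD]
      exact Finset.le_sup (f := fun j => (a j).totalDegree + (f j).totalDegree)
        (Finset.mem_univ j)
    have hm : (MvPolynomial.monomial (Finsupp.single (none : Option (Fin n))
        (D - ((a j).totalDegree + (f j).totalDegree))) (1:k)).IsHomogeneous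
        (D - ((a j).totalDegree + (f j).totalDegree)) :=
      isHomogeneous_monomial _ (by rw [← degO_eq_degree, degO_single])
    have hmul := hm.mul ((homog_isHomogeneous (a j)).mul (homog_isHomogeneous (f j)))
    have heq : D - ((a j).totalDegree + (f j).totalDegree) +
        ((a j).totalDegree + (f j).totalDegree) = D := by omega
    rwa [heq] at hmul
  have hFdehom : dehom F = f0 := by
    rw [hF, map_sum, ← ha]
    refine Finset.sum_congr rfl fun j _ => ?_
    rw [map_mul, map_mul, dehom_homog, dehom_homog, dehom_monomial,
      Finsupp.some_single_none, monomial_zero', C_1, one_mul]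
  have hFne : F ≠ 0 := fun h => hf0ne (by rw [← hFdehom, h, map_zero])
  have hFmem : F ∈ Ideal.span (Set.range fun j => homog (f j)) := by
    rw [hF]
    refine Ideal.sum_mem _ fun j _ => ?_
    rw [← mul_assoc]
    exact Ideal.mul_mem_left _ _ (Ideal.subset_span ⟨j, rfl⟩)
  obtain ⟨qc, hqc, hcond⟩ := hGstd F hFmem hFne
  choose d hd using hGhom
  set qch : Fin r → MvPolynomial (Option (Fin n)) k :=
    fun i => if d i ≤ D then MvPolynomial.homogeneousComponent (D - d i) (qc i) else 0
    with hqch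
  have hkey : ∀ i, qch i * G i = MvPolynomial.homogeneousComponent D (qc i * G i) :=
    fun i => (homogComp_mul (hd i) (qc i) D).symm
  have hFsum : ∑ i, qch i * G i = F := by
    calc ∑ i, qch i * G i = MvPolynomial.homogeneousComponent D (∑ i, qc i * G i) := by
          rw [map_sum]; exact Finset.sum_congr rfl fun i _ => hkey i
      _ = F := by
          rw [← hqc,
            homogeneousComponent_of_mem ((mem_homogeneousSubmodule _ _).2 hFhom), if_pos rfl]
  refine ⟨fun i => dehom (qch i), ?_, ?_⟩
  · rw [← hFdehom, ← hFsum, map_sum]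
    exact Finset.sum_congr rfl fun i _ => by rw [map_mul]
  · intro i
    by_cases h0 : qch i = 0
    · left; show dehom (qch i) = 0; rw [h0, map_zero]
    right
    have hdile : d i ≤ D := by
      by_contra h
      exact h0 (by simp only [hqch]; rw [if_neg h])
    have hPne : qch i * G i ≠ 0 := mul_ne_zero h0 (hGne i)
    have hPhom : (qch i * G i).IsHomogeneous D := by
      have h1 : (qch i).IsHomogeneous (D - d i) := by
        simp only [hqch]
        rw [if_pos hdile]
        exact homogeneousComponent_isHomogeneous _ _
      have h2 := h1.mul (hd i)
      rwa [Nat.sub_add_cancel hdile] at h2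
    obtain ⟨e', he'mem, he'max⟩ := exists_max (ltz prec) (ltz_total hprec.total)
      (ltz_trans hprec.trans) (qch i * G i).support
      (by rw [Finset.nonempty_iff_ne_empty, Ne, MvPolynomial.support_eq_empty]; exact hPne)
    have hqci : qc i ≠ 0 := by
      intro h
      exact hPne (by rw [hkey, h, zero_mul, map_zero])
    obtain ⟨ei, eF, hei, heF, hle2⟩ := (hcond i).resolve_left hqci
    have he'sub : e' ∈ (qc i * G i).support := by
      have hmem := he'mem
      rw [hkey] at hmem
      rw [MvPolynomial.mem_support_iff] at hmem ⊢
      intro h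
      apply hmem
      rw [coeff_homogeneousComponent]
      split <;> simp [h]
    have h1 : e' = ei ∨ ltz prec e' ei := by
      by_cases h : e' = ei
      · exact Or.inl h
      · exact Or.inr (hei.2 e' he'sub h)
    have h2 : e' = eF ∨ ltz prec e' eF := by
      rcases h1 with rfl | h1
      · exact hle2
      · rcases hle2 with rfl | hle2
        · exact Or.inr h1
        · exact Or.inr (ltz_trans hprec.trans _ _ _ h1 hle2)
    have hd1 : degO e' = D := degO_of_mem_support hPhom he'mem
    have hd2 : degO eF = D := degO_of_mem_support hFhom heF.1
    have hfin : e'.some = eF.some ∨ prec e'.some eF.some := by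
      rcases h2 with rfl | h2
      · exact Or.inl rfl
      · rcases h2 with h2 | ⟨_, h2⟩
        · exfalso; rw [hd1, hd2] at h2; exact Nat.lt_irrefl _ h2
        · exact Or.inr h2
    refine ⟨e'.some, eF.some, ?_, ?_, hfin⟩
    · have hx := dehom_isExpP hPhom ⟨he'mem, he'max⟩
      rwa [map_mul] at hx
    · have hx := dehom_isExpP hFhom heF
      rwa [hFdehom] at hx
end
end

section
/- Let k be a field and ≺ a local monomial order on ℕ^n such that |α| < |α'| implies α' ≺ α. Let I be an ideal of k[[x]], let m = (x_1,…,x_n) be the maximal ideal of k[[x]], and let E = Exp_≺(I). Then for every r ∈ ℕ, the k-vector space k[[x]]/(I + m^{r+1}) is finite dimensional and dim_k k[[x]]/(I + m^{r+1}) = card{α ∈ ℕ^n : α ∉ E and |α| ≤ r}; that is, the Hilbert–Samuel function of I equals the Hilbert–Samuel function of the monomial set E. -/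
open MvPowerSeries

noncomputable section

/-! The standard monomials `x^α`, `α ∉ E`, `|α| ≤ r`, give a basis of `k[[x]]/(I + m^(r+1))`.
They span: modulo `m^(r+1)` a series agrees with its truncation at degree `r`, and if
`β = exp f` with `f ∈ I`, then modulo `I` the monomial `x^β` is a combination of monomials
`≺ β`, so induction along `≺` over the finitely many exponents of degree `≤ r` applies.
They are independent: if a nonzero combination `F` of them is `f + h` with `f ∈ I` and
`h ∈ m^(r+1)`, then `exp f = exp F`, because every exponent of `h` has degree `> r` and so lies
below `exp F`; but `exp F ∉ E`. -/

namespace MvPowerSeries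

theorem span_range_X_eq_map_idealOfVars (σ R : Type*) [CommSemiring R] :
    Ideal.span (Set.range X) =
      (MvPolynomial.idealOfVars σ R).map (algebraMap (MvPolynomial σ R) (MvPowerSeries σ R)) := by
  rw [MvPolynomial.idealOfVars, Ideal.map_span, ← Set.range_comp]
  congr 2
  ext1
  exact (MvPolynomial.coe_X _).symm

variable {σ R : Type*} [CommRing R] [Finite σ]

/-- `R[[x]]` is the `(x)`-adic completion of `R[x]`, and the kernel of the `s`-th projection of
a completion is the `s`-th power of the ideal. -/
theorem mem_span_range_X_pow_iff {s : ℕ} {f : MvPowerSeries σ R} :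
    f ∈ Ideal.span (Set.range X) ^ s ↔ ∀ d : σ →₀ ℕ, d.degree < s → coeff d f = 0 := by
  set J := MvPolynomial.idealOfVars σ R
  let e := (toAdicCompletionAlgEquiv σ R).toLinearEquiv
  have hker : ((Ideal.span (Set.range X) ^ s : Ideal (MvPowerSeries σ R)).restrictScalars
      (MvPolynomial σ R)) = (AdicCompletion.eval J _ s ∘ₗ e.toLinearMap).ker := by
    rw [LinearMap.ker_comp, ← AdicCompletion.pow_smul_top_eq_ker_eval
      (MvPolynomial.idealOfVars_fg σ R), Submodule.comap_equiv_eq_map_symm,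
      Submodule.map_smul'', Submodule.map_top, LinearEquiv.range, Ideal.smul_top_eq_map,
      Ideal.map_pow, span_range_X_eq_map_idealOfVars σ R]
  have hf := congrArg (f ∈ ·) hker
  simp only [Submodule.restrictScalars_mem] at hf
  rw [hf, LinearMap.mem_ker]
  change Submodule.Quotient.mk (truncTotal s f) = (0 : _ ⧸ _) ↔ _
  rw [Submodule.Quotient.mk_eq_zero, smul_eq_mul, Ideal.mul_top,
    MvPolynomial.mem_pow_idealOfVars_iff']
  refine forall_congr' fun d => imp_congr_right fun hd => ?_
  rw [coeff_truncTotal _ hd]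

theorem sub_truncTotal_mem_span_range_X_pow (s : ℕ) (f : MvPowerSeries σ R) :
    f - truncTotal s f ∈ Ideal.span (Set.range X) ^ s :=
  mem_span_range_X_pow_iff.2 fun d hd => by
    rw [map_sub, MvPolynomial.coeff_coe, coeff_truncTotal _ hd, sub_self]

theorem mk_mem_of_mk_monomial_mem {K : Ideal (MvPowerSeries σ R)} {r : ℕ}
    (hK : Ideal.span (Set.range X) ^ (r + 1) ≤ K) {P : Submodule R (MvPowerSeries σ R ⧸ K)}
    {f : MvPowerSeries σ R}
    (hf : ∀ β : σ →₀ ℕ, β.degree ≤ r → coeff β f ≠ 0 → Ideal.Quotient.mk K (monomial β 1) ∈ P) :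
    Ideal.Quotient.mk K f ∈ P := by
  rw [← sub_add_cancel f (truncTotal (r + 1) f), map_add,
    Ideal.Quotient.eq_zero_iff_mem.2 (hK (sub_truncTotal_mem_span_range_X_pow _ f)), zero_add,
    (truncTotal (r + 1) f).as_sum, ← MvPolynomial.coeToMvPowerSeries.ringHom_apply, map_sum,
    map_sum]
  refine Submodule.sum_mem _ fun β hβ => ?_
  have hβf := MvPolynomial.mem_support_iff.1 hβ
  have hβr : β.degree < r + 1 := by
    by_contra h
    exact hβf (coeff_truncTotal_eq_zero _ (not_lt.1 h))
  rw [coeff_truncTotal _ hβr] at hβf ⊢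
  rw [MvPolynomial.coeToMvPowerSeries.ringHom_apply, MvPolynomial.coe_monomial,
    ← mul_one (coeff β f), ← smul_eq_mul, map_smul, ← Ideal.Quotient.mkₐ_eq_mk R, map_smul]
  exact P.smul_mem _ (hf β (Nat.lt_succ_iff.1 hβr) hβf)

end MvPowerSeries

section StandardExponents

variable {n : ℕ} {k : Type*} {lt : (Fin n →₀ ℕ) → (Fin n →₀ ℕ) → Prop}

theorem IsMonomialOrder.isStrictOrder {M : Type*} [AddCommMonoid M] {lt : M → M → Prop}
    (hlt : IsMonomialOrder lt) : IsStrictOrder M lt where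
  irrefl := hlt.irrefl
  trans := hlt.trans

theorem IsMonomialOrder.exists_isExp [Semiring k] (hlt : IsMonomialOrder lt)
    {f : MvPowerSeries (Fin n) k} (hf : f ≠ 0) (hfin : (ND f).Finite) : ∃ e, IsExp lt f e := by
  have := hlt.isStrictOrder
  obtain ⟨d, hd⟩ := (ne_zero_iff_exists_coeff_ne_zero f).1 hf
  obtain ⟨e, he, hmax⟩ :=
    (Set.wellFoundedOn_iff.1 (hfin.wellFoundedOn (r := Function.swap lt))).has_min (ND f) ⟨d, hd⟩
  refine ⟨e, he, fun β hβ hβe => ?_⟩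
  rcases hlt.total β e with h | h | h
  · exact h
  · exact absurd h hβe
  · exact absurd ⟨h, hβ, he⟩ (hmax β hβ)

theorem IsExp.sub_of_mem_span_range_X_pow [CommRing k]
    (hdeg : ∀ α β : Fin n →₀ ℕ, α.degree < β.degree → lt β α) {F h : MvPowerSeries (Fin n) k}
    {e : Fin n →₀ ℕ} {r : ℕ} (hF : IsExp lt F e) (he : e.degree ≤ r)
    (hh : h ∈ Ideal.span (Set.range X) ^ (r + 1)) : IsExp lt (F - h) e := by
  have hcoeff : ∀ β : Fin n →₀ ℕ, β.degree ≤ r → coeff β (F - h) = coeff β F := fun β hβ => by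
    rw [map_sub, mem_span_range_X_pow_iff.1 hh β (Nat.lt_succ_of_le hβ), sub_zero]
  refine ⟨by rw [ND, Set.mem_ofPred_eq, hcoeff e he]; exact hF.1, fun β hβ hβe => ?_⟩
  by_cases hβr : β.degree ≤ r
  · exact hF.2 β (by rwa [ND, Set.mem_ofPred_eq, ← hcoeff β hβr]) hβe
  · exact hdeg e β (by omega)

def standardExponents [Semiring k] (lt : (Fin n →₀ ℕ) → (Fin n →₀ ℕ) → Prop)
    (I : Ideal (MvPowerSeries (Fin n) k)) (r : ℕ) : Set (Fin n →₀ ℕ) :=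
  {α | α ∉ ExpSet lt I ∧ α.degree ≤ r}

theorem finite_standardExponents [Semiring k] (I : Ideal (MvPowerSeries (Fin n) k)) (r : ℕ) :
    (standardExponents lt I r).Finite :=
  (Finsupp.finite_of_degree_le r).subset fun _ hα => hα.2

theorem eq_zero_of_coe_mem_sup [CommRing k] (hlt : IsMonomialOrder lt)
    (hdeg : ∀ α β : Fin n →₀ ℕ, α.degree < β.degree → lt β α)
    {I : Ideal (MvPowerSeries (Fin n) k)} {r : ℕ} {p : MvPolynomial (Fin n) k}
    (hp : ↑p.support ⊆ standardExponents lt I r)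
    (hpI : (p : MvPowerSeries (Fin n) k) ∈ I ⊔ Ideal.span (Set.range X) ^ (r + 1)) : p = 0 := by
  by_contra hp0
  have hND : ND (p : MvPowerSeries (Fin n) k) ⊆ standardExponents lt I r := fun β hβ =>
    hp (MvPolynomial.mem_support_iff.2 (by simpa [ND] using hβ))
  obtain ⟨e, he⟩ := hlt.exists_isExp (MvPolynomial.coe_eq_zero_iff.not.2 hp0)
    ((finite_standardExponents I r).subset hND)
  obtain ⟨f, hf, h, hh, hfh⟩ := Submodule.mem_sup.1 hpI
  have hfe := he.sub_of_mem_span_range_X_pow hdeg (hND he.1).2 hh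
  rw [← hfh, add_sub_cancel_right] at hfe
  exact (hND he.1).1 ⟨f, hf, hfe⟩

theorem mk_monomial_mem_of_degree_le [Field k] (hlt : IsMonomialOrder lt)
    {I K : Ideal (MvPowerSeries (Fin n) k)} {r : ℕ} (hIK : I ≤ K)
    (hK : Ideal.span (Set.range X) ^ (r + 1) ≤ K) {P : Submodule k (MvPowerSeries (Fin n) k ⧸ K)}
    (hP : ∀ α ∈ standardExponents lt I r, Ideal.Quotient.mk K (monomial α 1) ∈ P)
    {β : Fin n →₀ ℕ} (hβ : β.degree ≤ r) : Ideal.Quotient.mk K (monomial β 1) ∈ P := by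
  have := hlt.isStrictOrder
  refine ((Finsupp.finite_of_degree_le r).wellFoundedOn (r := lt)).induction hβ
    (P := fun b => Ideal.Quotient.mk K (monomial b 1) ∈ P) fun b hb ih => ?_
  by_cases hbE : b ∈ ExpSet lt I
  swap
  · exact hP b ⟨hbE, hb⟩
  obtain ⟨f, hfI, hfb⟩ := hbE
  set c := coeff b f
  -- modulo `I`, `x^b` is a multiple of `f - c x^b`, whose exponents are all `≺ b`
  have hmono : monomial b (1 : k) = c⁻¹ • f - c⁻¹ • (f - c • monomial b 1) := by
    rw [smul_sub, smul_smul, inv_mul_cancel₀ hfb.1, one_smul, sub_sub_cancel]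
  rw [hmono, map_sub, ← Ideal.Quotient.mkₐ_eq_mk k, map_smul, map_smul, Ideal.Quotient.mkₐ_eq_mk,
    Ideal.Quotient.eq_zero_iff_mem.2 (hIK hfI), smul_zero, zero_sub]
  refine P.neg_mem (P.smul_mem _ (mk_mem_of_mk_monomial_mem hK fun β hβr hβ => ?_))
  have hβb : β ≠ b := by
    rintro rfl
    simp [c] at hβ
  refine ih β hβr (hfb.2 β ?_ hβb)
  simpa [ND, coeff_monomial, hβb] using hβ

variable [Field k]

def standardMonomialsToQuotient (lt : (Fin n →₀ ℕ) → (Fin n →₀ ℕ) → Prop)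
    (I : Ideal (MvPowerSeries (Fin n) k)) (r : ℕ) :
    MvPolynomial.restrictSupport k (standardExponents lt I r) →ₗ[k]
      MvPowerSeries (Fin n) k ⧸ (I + Ideal.span (Set.range X) ^ (r + 1)) :=
  (Ideal.Quotient.mkₐ k _).toLinearMap ∘ₗ
    (MvPolynomial.coeToMvPowerSeries.algHom k).toLinearMap ∘ₗ Submodule.subtype _

theorem bijective_standardMonomialsToQuotient (hlt : IsMonomialOrder lt)
    (hdeg : ∀ α β : Fin n →₀ ℕ, α.degree < β.degree → lt β α)
    (I : Ideal (MvPowerSeries (Fin n) k)) (r : ℕ) :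
    Function.Bijective (standardMonomialsToQuotient lt I r) := by
  refine ⟨(injective_iff_map_eq_zero _).2 fun ⟨p, hp⟩ h0 =>
    Subtype.ext (eq_zero_of_coe_mem_sup hlt hdeg hp (Ideal.Quotient.eq_zero_iff_mem.1 h0)), ?_⟩
  intro x
  obtain ⟨f, rfl⟩ := Ideal.Quotient.mk_surjective x
  refine mk_mem_of_mk_monomial_mem (P := LinearMap.range (standardMonomialsToQuotient lt I r))
    le_sup_right fun β hβ _ => mk_monomial_mem_of_degree_le hlt le_sup_left le_sup_right
      (fun α hα => LinearMap.mem_range.2 ⟨⟨MvPolynomial.monomial α 1,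
        (MvPolynomial.monomial_mem_restrictSupport k).2 (Or.inl hα)⟩, ?_⟩) hβ
  simp [standardMonomialsToQuotient]

end StandardExponents

theorem hilbertSamuel_eq_of_expSet_general {n : ℕ} (k : Type) [Field k]
    (lt : (Fin n →₀ ℕ) → (Fin n →₀ ℕ) → Prop) (hlt : IsLocalMonomialOrder lt)
    (hdeg : ∀ α β : Fin n →₀ ℕ, (α.sum fun _ c => c) < (β.sum fun _ c => c) → lt β α)
    (I : Ideal (MvPowerSeries (Fin n) k)) (r : ℕ) :
    Module.Finite k
      (MvPowerSeries (Fin n) k ⧸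
        (I + (Ideal.span (Set.range fun i =>
          (MvPowerSeries.X i : MvPowerSeries (Fin n) k))) ^ (r + 1))) ∧
    Module.finrank k
      (MvPowerSeries (Fin n) k ⧸
        (I + (Ideal.span (Set.range fun i =>
          (MvPowerSeries.X i : MvPowerSeries (Fin n) k))) ^ (r + 1))) =
      Set.ncard {α : Fin n →₀ ℕ | α ∉ ExpSet lt I ∧ (α.sum fun _ c => c) ≤ r} := by
  let e := LinearEquiv.ofBijective _
    (bijective_standardMonomialsToQuotient hlt.toIsMonomialOrder hdeg I r)
  have : Finite (standardExponents lt I r) := (finite_standardExponents I r).to_subtype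
  have := Module.Finite.of_basis (MvPolynomial.basisRestrictSupport k (standardExponents lt I r))
  refine ⟨Module.Finite.equiv e, ?_⟩
  rw [← e.finrank_eq, Module.finrank_eq_nat_card_basis (MvPolynomial.basisRestrictSupport k _),
    Nat.card_coe_set_eq]
  rfl

/-- for a local monomial order `≺` refining (the inverse of) total degree,
an ideal `I ⊆ k[[x]]`, `m = (x_1, …, x_n)` and `E = Exp_≺(I)`, for every `r` the quotient
`k[[x]]/(I + m^{r+1})` is a finite-dimensional `k`-vector space of dimension
`card {α ∉ E : |α| ≤ r}`: the Hilbert–Samuel function of `I` equals that of `E`. -/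
theorem hilbertSamuel_eq_of_expSet {n : ℕ} (hn : 1 ≤ n) (k : Type) [Field k]
    (lt : (Fin n →₀ ℕ) → (Fin n →₀ ℕ) → Prop) (hlt : IsLocalMonomialOrder lt)
    (hdeg : ∀ α β : Fin n →₀ ℕ, (α.sum fun _ c => c) < (β.sum fun _ c => c) → lt β α)
    (I : Ideal (MvPowerSeries (Fin n) k)) (r : ℕ) :
    Module.Finite k
      (MvPowerSeries (Fin n) k ⧸
        (I + (Ideal.span (Set.range fun i =>
          (MvPowerSeries.X i : MvPowerSeries (Fin n) k))) ^ (r + 1))) ∧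
    Module.finrank k
      (MvPowerSeries (Fin n) k ⧸
        (I + (Ideal.span (Set.range fun i =>
          (MvPowerSeries.X i : MvPowerSeries (Fin n) k))) ^ (r + 1))) =
      Set.ncard {α : Fin n →₀ ℕ | α ∉ ExpSet lt I ∧ (α.sum fun _ c => c) ≤ r} :=
  hilbertSamuel_eq_of_expSet_general k lt hlt hdeg I r
end
end
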